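/- Let a1,a2,a3,b1,b2,b3 be real numbers with 0 < ai < 1 and 0 < bi < 1 for all i (indices mod 3). Define u_i = -b_{i+2}/b_i - b_{i+1}/b_i - b_{i+1}/a_i + b_{i+2} + 1 for i = 1,2,3. Then min(u1,u2,u3) < 0. -/
import Mathlib

lemma two_le_div_add_div (x y : ℝ) (hx : 0 < x) (hy : 0 < y) :
    2 ≤ x / y + y / x := by
  rw [div_add_div _ _ (ne_of_gt hy) (ne_of_gt hx), le_div_iff₀ (by positivity)]
  nlinarith [sq_nonneg (x - y)]

theorem stmt_2 (a b : ZMod 3 → ℝ)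
    (ha : ∀ i, 0 < a i ∧ a i < 1) (hb : ∀ i, 0 < b i ∧ b i < 1)
    (u : ZMod 3 → ℝ)
    (hu : ∀ i, u i = -(b (i + 2) / b i) - b (i + 1) / b i - b (i + 1) / a i + b (i + 2) + 1) :
    min (u 0) (min (u 1) (u 2)) < 0 := by
  have e1 : (1 + 2 : ZMod 3) = 0 := by decide
  have e2 : (2 + 2 : ZMod 3) = 1 := by decide
  have e3 : (2 + 1 : ZMod 3) = 0 := by decide
  have e4 : (0 + 2 : ZMod 3) = 2 := by decide
  have e5 : (0 + 1 : ZMod 3) = 1 := by decide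
  have e6 : (1 + 1 : ZMod 3) = 2 := by decide
  have h0 := hu 0
  have h1 := hu 1
  have h2 := hu 2
  rw [e4, e5] at h0
  rw [e1, e6] at h1
  rw [e2, e3] at h2
  have d01 := two_le_div_add_div (b 0) (b 1) (hb 0).1 (hb 1).1
  have d12 := two_le_div_add_div (b 1) (b 2) (hb 1).1 (hb 2).1
  have d02 := two_le_div_add_div (b 0) (b 2) (hb 0).1 (hb 2).1
  have f0 : b 1 < b 1 / a 0 := by
    rw [lt_div_iff₀ (ha 0).1]; nlinarith [(ha 0).2, (hb 1).1]
  have f1 : b 2 < b 2 / a 1 := by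
    rw [lt_div_iff₀ (ha 1).1]; nlinarith [(ha 1).2, (hb 2).1]
  have f2 : b 0 < b 0 / a 2 := by
    rw [lt_div_iff₀ (ha 2).1]; nlinarith [(ha 2).2, (hb 0).1]
  have hsum : u 0 + u 1 + u 2 < 0 := by
    rw [h0, h1, h2]; linarith
  have m1 : min (u 0) (min (u 1) (u 2)) ≤ u 0 := min_le_left _ _
  have m2 : min (u 0) (min (u 1) (u 2)) ≤ u 1 :=
    le_trans (min_le_right _ _) (min_le_left _ _)
  have m3 : min (u 0) (min (u 1) (u 2)) ≤ u 2 :=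
    le_trans (min_le_right _ _) (min_le_right _ _)
  linarith
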